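/- arXiv:1602.02800 — 4 statements merged into one kernel-verified Lean document; each statement's English description precedes it below -/
import Mathlib

section
/- If the L2-gain from input deviation ω̃ to output deviation p̃ is at most K < D on [0, t₁], then ∫₀^{t₁} (p̃(t) - D·ω̃(t))·(-ω̃(t)) dt ≥ (D - K)·∫₀^{t₁} ω̃(t)² dt ≥ 0. That is, the map from -ω̃ to s̃ = p̃ - D·ω̃ satisfies an input-strict passivity integral inequality. -/
/-- input-strict passivity integral inequality from an L2-gain bound.
If √(∫₀^{t₁} p̃² ) ≤ K √(∫₀^{t₁} ω̃²) with 0 ≤ K < D, then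
∫₀^{t₁} (p̃ - D ω̃)(-ω̃) ≥ (D - K) ∫₀^{t₁} ω̃² ≥ 0. -/
theorem stmt_0 (D K t₁ : ℝ) (hK : 0 ≤ K) (hKD : K < D) (ht : 0 < t₁)
    (ω p : ℝ → ℝ)
    (hω2 : IntervalIntegrable (fun t => (ω t) ^ 2) MeasureTheory.volume 0 t₁)
    (hp2 : IntervalIntegrable (fun t => (p t) ^ 2) MeasureTheory.volume 0 t₁)
    (hpω : IntervalIntegrable (fun t => p t * ω t) MeasureTheory.volume 0 t₁)
    (hgain : Real.sqrt (∫ t in (0:ℝ)..t₁, (p t) ^ 2) ≤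
      K * Real.sqrt (∫ t in (0:ℝ)..t₁, (ω t) ^ 2)) :
    (D - K) * ∫ t in (0:ℝ)..t₁, (ω t) ^ 2 ≤
      (∫ t in (0:ℝ)..t₁, (p t - D * ω t) * (-(ω t))) ∧
    0 ≤ (D - K) * ∫ t in (0:ℝ)..t₁, (ω t) ^ 2 := by
  set A := ∫ t in (0:ℝ)..t₁, (p t) ^ 2 with hA
  set B := ∫ t in (0:ℝ)..t₁, (ω t) ^ 2 with hB
  have hBnn : 0 ≤ B := intervalIntegral.integral_nonneg ht.le (fun x _ => sq_nonneg _)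
  have hAnn : 0 ≤ A := intervalIntegral.integral_nonneg ht.le (fun x _ => sq_nonneg _)
  have hA2 : A ≤ K ^ 2 * B := by
    have := mul_self_le_mul_self (Real.sqrt_nonneg A) hgain
    rw [Real.mul_self_sqrt hAnn] at this
    calc A ≤ (K * Real.sqrt B) * (K * Real.sqrt B) := this
      _ = K ^ 2 * (Real.sqrt B * Real.sqrt B) := by ring
      _ = K ^ 2 * B := by rw [Real.mul_self_sqrt hBnn]
  set I := ∫ t in (0:ℝ)..t₁, p t * ω t with hI
  -- key pointwise bound: for all ε > 0, I ≤ A/(2ε) + ε B / 2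
  have key : ∀ ε : ℝ, 0 < ε → I ≤ (1 / (2 * ε)) * A + (ε / 2) * B := by
    intro ε hε
    have hint : IntervalIntegrable
        (fun t => (1 / (2 * ε)) * (p t) ^ 2 + (ε / 2) * (ω t) ^ 2)
        MeasureTheory.volume 0 t₁ :=
      (hp2.const_mul _).add (hω2.const_mul _)
    have hmono : I ≤ ∫ t in (0:ℝ)..t₁,
        ((1 / (2 * ε)) * (p t) ^ 2 + (ε / 2) * (ω t) ^ 2) := by
      refine intervalIntegral.integral_mono_on ht.le hpω hint (fun x _ => ?_)
      have hε' : (0:ℝ) < 2 * ε := by linarith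
      have hid : (1 / (2 * ε)) * (p x) ^ 2 + (ε / 2) * (ω x) ^ 2 - p x * ω x
          = (p x - ε * ω x) ^ 2 / (2 * ε) := by
        field_simp
        ring
      nlinarith [div_nonneg (sq_nonneg (p x - ε * ω x)) hε'.le]
    rw [intervalIntegral.integral_add (hp2.const_mul _) (hω2.const_mul _),
      intervalIntegral.integral_const_mul, intervalIntegral.integral_const_mul] at hmono
    exact hmono
  have hIK : I ≤ K * B := by
    rcases eq_or_lt_of_le hK with h0 | hKpos
    · -- K = 0 : A = 0, and I ≤ ε B /2 for all ε
      have hA0 : A = 0 := le_antisymm (by rw [← h0] at hA2; simpa using hA2) hAnn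
      have : I ≤ 0 := by
        by_contra h
        push_neg at h
        have hε : 0 < I / (B + 1) := div_pos h (by linarith)
        have := key (I / (B + 1)) hε
        rw [hA0] at this
        have hB1 : (0:ℝ) < B + 1 := by linarith
        rw [mul_zero, zero_add, div_div, div_mul_eq_mul_div,
          le_div_iff₀ (by linarith : (0:ℝ) < (B + 1) * 2)] at this
        nlinarith
      simpa [← h0] using this
    · have := key K hKpos
      calc I ≤ (1 / (2 * K)) * A + (K / 2) * B := this
        _ ≤ (1 / (2 * K)) * (K ^ 2 * B) + (K / 2) * B := by
            have : (0:ℝ) < 1 / (2 * K) := by positivity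
            nlinarith
        _ = K * B := by field_simp; ring
  constructor
  · have heq : (∫ t in (0:ℝ)..t₁, (p t - D * ω t) * (-(ω t))) = D * B - I := by
      have : ∀ t : ℝ, (p t - D * ω t) * (-(ω t)) = D * (ω t) ^ 2 - p t * ω t := by
        intro t; ring
      rw [intervalIntegral.integral_congr (fun t _ => this t),
        intervalIntegral.integral_sub (hω2.const_mul D) hpω,
        intervalIntegral.integral_const_mul]
    rw [heq]
    nlinarith
  · nlinarith
end

section
/- For positive time constants τ_g and τ_b, the minimum over all real ω of the real part of T(jω) = 1/((τ_g jω + 1)(τ_b jω + 1)) equals -τ_g τ_b / ((τ_g + τ_b)² + 2(τ_g + τ_b)√(τ_g τ_b)), and it is attained at ω² = ((τ_g + τ_b) + √(τ_g τ_b)) / (τ_g τ_b)^{3/2}. -/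
open Complex

lemma re_one_div (u v : ℝ) :
    ((1 : ℂ) / ((u : ℂ) + (v : ℂ) * Complex.I)).re = u / (u ^ 2 + v ^ 2) := by
  rw [one_div, Complex.inv_re, Complex.normSq_add_mul_I]
  simp

lemma prod_eq (a b ω : ℝ) :
    (((a : ℂ) * (Complex.I * ω) + 1) * ((b : ℂ) * (Complex.I * ω) + 1)) =
      ((1 - a * b * ω ^ 2 : ℝ) : ℂ) + (((a + b) * ω : ℝ) : ℂ) * Complex.I := by
  apply Complex.ext <;>
    simp [Complex.mul_re, Complex.mul_im, ← Complex.ofReal_pow] <;> ring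

/-- the minimum over ω of Re T(jω), T(s) = 1/((τg s+1)(τb s+1)), equals
-τg τb / ((τg+τb)² + 2(τg+τb)√(τg τb)), attained at
ω² = ((τg+τb) + √(τg τb)) / (τg τb)^{3/2}. -/
theorem stmt_3 (τg τb : ℝ) (hg : 0 < τg) (hb : 0 < τb) :
    (∀ ω : ℝ,
      -(τg * τb) / ((τg + τb) ^ 2 + 2 * (τg + τb) * Real.sqrt (τg * τb)) ≤
        ((1 : ℂ) / (((τg : ℂ) * (Complex.I * ω) + 1) * ((τb : ℂ) * (Complex.I * ω) + 1))).re) ∧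
    (∀ ω : ℝ, ω ^ 2 = ((τg + τb) + Real.sqrt (τg * τb)) / (τg * τb) ^ ((3 : ℝ) / 2) →
      ((1 : ℂ) / (((τg : ℂ) * (Complex.I * ω) + 1) * ((τb : ℂ) * (Complex.I * ω) + 1))).re =
        -(τg * τb) / ((τg + τb) ^ 2 + 2 * (τg + τb) * Real.sqrt (τg * τb))) := by
  have hppos : 0 < τg * τb := mul_pos hg hb
  have hspos : 0 < τg + τb := add_pos hg hb
  set q := Real.sqrt (τg * τb) with hqdef
  have hqpos : 0 < q := Real.sqrt_pos.mpr hppos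
  have hq2 : τg * τb = q ^ 2 := (Real.sq_sqrt hppos.le).symm
  have hA : 0 < (τg + τb) ^ 2 + 2 * (τg + τb) * q := by positivity
  have hD : ∀ ω : ℝ, 0 < (1 - q ^ 2 * ω ^ 2) ^ 2 + ((τg + τb) * ω) ^ 2 := by
    intro ω
    rcases eq_or_ne ω 0 with h | h
    · simp [h]
    · have h1 : 0 < ((τg + τb) * ω) ^ 2 := by positivity
      nlinarith [sq_nonneg (1 - q ^ 2 * ω ^ 2)]
  constructor
  · intro ω
    rw [prod_eq, re_one_div, hq2]
    rw [div_le_div_iff₀ hA (hD ω)]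
    nlinarith [sq_nonneg ((τg + τb) + q * (1 - q ^ 2 * ω ^ 2)), sq_nonneg ((τg + τb) * ω),
      sq_nonneg ω]
  · intro ω hω
    have h32 : (τg * τb) ^ ((3 : ℝ) / 2) = q ^ 3 := by
      rw [hqdef, Real.sqrt_eq_rpow, ← Real.rpow_natCast ((τg * τb) ^ ((1:ℝ)/2)) 3,
        ← Real.rpow_mul hppos.le]
      norm_num
    rw [h32] at hω
    have hq3 : (q : ℝ) ^ 3 ≠ 0 := by positivity
    have hX : ω ^ 2 * q ^ 3 = (τg + τb) + q := by
      field_simp at hω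
      linarith [hω]
    rw [prod_eq, re_one_div, hq2]
    rw [div_eq_div_iff (ne_of_gt (hD ω)) (ne_of_gt hA)]
    linear_combination (q ^ 3 * ω ^ 2 - ((τg + τb) + q)) * hX
end

section
/- For positive time constants τ_g, τ_b with ratio a = τ_b/τ_g, the maximum gain ratio K/D preserving passivity, given by K_max/D = ((1+a)² + 2(1+a)√a)/a, is at least 8 for all a > 0, with equality at a = 1, and tends to infinity as a → 0⁺. -/
lemma key (a : ℝ) (ha : 0 < a) : 8 * a ≤ (1 + a) ^ 2 + 2 * (1 + a) * Real.sqrt a := by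
  have hs : Real.sqrt a ^ 2 = a := Real.sq_sqrt ha.le
  have h1 : 2 * Real.sqrt a ≤ 1 + a := by
    nlinarith [sq_nonneg (1 - Real.sqrt a)]
  have hsnn : 0 ≤ Real.sqrt a := Real.sqrt_nonneg a
  nlinarith [sq_nonneg (1 - a), mul_le_mul_of_nonneg_right h1 hsnn]

/-- K_max/D as a function of a = τb/τg, namely
f(a) = ((1+a)² + 2(1+a)√a)/a, satisfies f(a) ≥ 8 for all a > 0, f(1) = 8,
and f(a) → ∞ as a → 0⁺. -/
theorem stmt_4 :
    (∀ a : ℝ, 0 < a → 8 ≤ ((1 + a) ^ 2 + 2 * (1 + a) * Real.sqrt a) / a) ∧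
    ((1 + (1:ℝ)) ^ 2 + 2 * (1 + (1:ℝ)) * Real.sqrt 1) / 1 = 8 ∧
    Filter.Tendsto (fun a : ℝ => ((1 + a) ^ 2 + 2 * (1 + a) * Real.sqrt a) / a)
      (nhdsWithin 0 (Set.Ioi 0)) Filter.atTop := by
  refine ⟨fun a ha => ?_, by simp [Real.sqrt_one]; norm_num, ?_⟩
  · rw [le_div_iff₀ ha]
    linarith [key a ha]
  · refine Filter.tendsto_atTop_mono' _ ?_ tendsto_inv_nhdsGT_zero
    filter_upwards [self_mem_nhdsWithin] with a (ha : 0 < a)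
    rw [inv_eq_one_div, div_le_div_iff₀ ha ha]
    have hsnn : 0 ≤ Real.sqrt a := Real.sqrt_nonneg a
    nlinarith [sq_nonneg a]
end

section
/- Consider the single-variable equation F(ω) := Σ_{j∈G} g_j(ω) + Σ_{j∈N} (c_j(ω) + h_j(ω)) = -P, where each g_j and c_j is continuous and strictly increasing with g_j(0) = c_j(0) = 0, and each h_j is continuous and nondecreasing with h_j(0) = 0. If ω₁ solves the equation with all c_j present and ω₀ solves the equation obtained by deleting the c_j terms (for the same P ≠ 0), then |ω₁| ≤ |ω₀|; moreover if ω₀ ≠ 0 and the c_j are strictly increasing, then |ω₁| < |ω₀|. That is, including controllable demand strictly reduces the magnitude of the steady state frequency deviation. -/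
/-!
Write the two equations as `F ω₀ = -P = F ω₁ + C ω₁`, with `F = ∑ g + ∑ h` monotone and
`C = ∑ c` strictly increasing with `C 0 = 0`. The extra term `C ω₁` has the sign of `ω₁`, so
`F ω₀` lies strictly beyond `F ω₁` on the side of `ω₁`; monotonicity of `F` then puts `ω₀`
strictly beyond `ω₁` on that side, whence `|ω₁| < |ω₀|` unless `ω₁ = 0`.
-/

open Finset

theorem Finset.monotone_sum {ι α β : Type*} [Preorder α] [AddCommMonoid β] [PartialOrder β]
    [IsOrderedAddMonoid β] {s : Finset ι} {f : ι → α → β} (hf : ∀ i ∈ s, Monotone (f i)) :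
    Monotone fun x => ∑ i ∈ s, f i x :=
  fun _ _ hab => sum_le_sum fun i hi => hf i hi hab

theorem Finset.strictMono_sum {ι α β : Type*} [Preorder α] [AddCommMonoid β] [PartialOrder β]
    [IsOrderedCancelAddMonoid β] {s : Finset ι} {f : ι → α → β} (hs : s.Nonempty)
    (hf : ∀ i ∈ s, StrictMono (f i)) : StrictMono fun x => ∑ i ∈ s, f i x :=
  fun _ _ hab => sum_lt_sum_of_nonempty hs fun i hi => hf i hi hab

theorem abs_lt_abs_of_apply_eq_apply_add {α β : Type*} [AddCommGroup α] [LinearOrder α]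
    [IsOrderedAddMonoid α] [AddCommMonoid β] [PartialOrder β] [IsOrderedCancelAddMonoid β]
    {F C : α → β} (hF : Monotone F) (hC : StrictMono C) (hC0 : C 0 = 0) {x y : α}
    (hxy : F y = F x + C x) (hx : x ≠ 0) : |x| < |y| := by
  rcases hx.lt_or_gt with hneg | hpos
  · have hCx : C x < 0 := hC0 ▸ hC hneg
    have hyx : y < x := hF.reflect_lt (hxy ▸ add_lt_of_neg_right (F x) hCx)
    rw [abs_of_neg hneg, abs_of_neg (hyx.trans hneg)]
    exact neg_lt_neg hyx
  · have hCx : 0 < C x := hC0 ▸ hC hpos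
    have hxy' : x < y := hF.reflect_lt (hxy ▸ lt_add_of_pos_right (F x) hCx)
    rw [abs_of_pos hpos, abs_of_pos (hpos.trans hxy')]
    exact hxy'

theorem stmt_7_general {ι : Type*} (G N : Finset ι)
    (hN : N.Nonempty)
    (g c h : ι → ℝ → ℝ)
    (hgm : ∀ j ∈ G, StrictMono (g j))
    (hcm : ∀ j ∈ N, StrictMono (c j))
    (hc0 : ∀ j ∈ N, c j 0 = 0)
    (hhm : ∀ j ∈ N, Monotone (h j))
    (P ω₁ ω₀ : ℝ)
    (h1 : ∑ j ∈ G, g j ω₁ + ∑ j ∈ N, (c j ω₁ + h j ω₁) = -P)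
    (h0 : ∑ j ∈ G, g j ω₀ + ∑ j ∈ N, h j ω₀ = -P) :
    |ω₁| ≤ |ω₀| ∧ (ω₀ ≠ 0 → |ω₁| < |ω₀|) := by
  set F : ℝ → ℝ := fun ω => ∑ j ∈ G, g j ω + ∑ j ∈ N, h j ω
  set C : ℝ → ℝ := fun ω => ∑ j ∈ N, c j ω
  have hF : Monotone F :=
    (monotone_sum fun j hj => (hgm j hj).monotone).add (monotone_sum hhm)
  have hC : StrictMono C := strictMono_sum hN hcm
  have hC0 : C 0 = 0 := sum_eq_zero hc0
  have hω : F ω₀ = F ω₁ + C ω₁ := by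
    simp only [F, C]
    rw [h0, ← h1, sum_add_distrib]
    ring
  rcases eq_or_ne ω₁ 0 with rfl | hω₁
  · rw [abs_zero]
    exact ⟨abs_nonneg ω₀, abs_pos.mpr⟩
  · have hlt := abs_lt_abs_of_apply_eq_apply_add hF hC hC0 hω hω₁
    exact ⟨hlt.le, fun _ => hlt⟩

/-- including controllable demand (the strictly increasing terms c_j)
reduces the magnitude of the steady state frequency deviation. -/
theorem stmt_7 {ι : Type*} [DecidableEq ι] (G N : Finset ι) (hGN : G ⊆ N)
    (hG : G.Nonempty) (hN : N.Nonempty)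
    (g c h : ι → ℝ → ℝ)
    (hgc : ∀ j ∈ G, Continuous (g j)) (hgm : ∀ j ∈ G, StrictMono (g j))
    (hg0 : ∀ j ∈ G, g j 0 = 0)
    (hcc : ∀ j ∈ N, Continuous (c j)) (hcm : ∀ j ∈ N, StrictMono (c j))
    (hc0 : ∀ j ∈ N, c j 0 = 0)
    (hhc : ∀ j ∈ N, Continuous (h j)) (hhm : ∀ j ∈ N, Monotone (h j))
    (hh0 : ∀ j ∈ N, h j 0 = 0)
    (P ω₁ ω₀ : ℝ) (hP : P ≠ 0)
    (h1 : ∑ j ∈ G, g j ω₁ + ∑ j ∈ N, (c j ω₁ + h j ω₁) = -P)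
    (h0 : ∑ j ∈ G, g j ω₀ + ∑ j ∈ N, h j ω₀ = -P) :
    |ω₁| ≤ |ω₀| ∧ (ω₀ ≠ 0 → |ω₁| < |ω₀|) :=
  stmt_7_general G N hN g c h hgm hcm hc0 hhm P ω₁ ω₀ h1 h0
end
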